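/- arXiv:1906.08715 — 2 statements merged into one kernel-verified Lean document; each statement's English description precedes it below -/
import Mathlib

section
/- Let a, b be orthonormal vectors in ℂ², ε > 0, and W = a a* + ε² b b*. Set f = W^{1/2} b and g = W^{-1/2} a. Then ‖W⁻¹ W^{1/2} f‖ · ‖W W^{-1/2} g‖ = 1, while ‖f‖ = ε and ‖g‖ = 1. In particular there is no constant C (independent of W) such that ‖W⁻¹ W^{1/2} f‖ · ‖W W^{-1/2} g‖ ≤ C ‖f‖ ‖g‖ holds for all positive definite W and all f, g. -/
/-!
Since `W⁻¹ W^{1/2} W^{1/2} = 1 = W W^{-1/2} W^{-1/2}`, the left-hand side of the bilinear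
bound at `f = W^{1/2} b`, `g = W^{-1/2} a` is `‖b‖ ‖a‖ = 1` for every weight. For
`W = a a* + δ² b b*` the square roots are again diagonal in the frame `a, b`, so
`W^{1/2} b = δ b` and `W^{-1/2} a = a`: the right-hand side is `C δ`, which is `< 1` once `δ`
is small.
-/

open Matrix
open scoped ComplexOrder

/-- The square root of a positive semidefinite matrix, as defined in Mathlib of December 2024
(removed since; restored here with its old definition). -/
noncomputable def Matrix.PosSemidef.sqrt {n 𝕜 : Type*} [Fintype n] [DecidableEq n] [RCLike 𝕜]
    {A : Matrix n n 𝕜} (hA : A.PosSemidef) : Matrix n n 𝕜 :=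
  hA.1.eigenvectorUnitary.1 * diagonal ((↑) ∘ (Real.sqrt ∘ hA.1.eigenvalues)) *
    (star hA.1.eigenvectorUnitary : Matrix n n 𝕜)

noncomputable def euclNorm {d : ℕ} (v : Fin d → ℂ) : ℝ :=
  ‖(EuclideanSpace.equiv (Fin d) ℂ).symm v‖

open scoped MatrixOrder in
lemma Matrix.PosSemidef.sqrt_eq_cfcSqrt {n 𝕜 : Type*} [Fintype n] [DecidableEq n] [RCLike 𝕜]
    {A : Matrix n n 𝕜} (hA : A.PosSemidef) : hA.sqrt = CFC.sqrt A := by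
  rw [CFC.sqrt_eq_cfc, cfc_nnreal_eq_real _ A, hA.1.cfc_eq, IsHermitian.cfc,
    Unitary.conjStarAlgAut_apply, Matrix.PosSemidef.sqrt]
  congr 3
  ext i
  simp [Real.coe_toNNReal', hA.eigenvalues_nonneg i]

open scoped MatrixOrder in
lemma Matrix.PosSemidef.sqrt_mul_sqrt {n 𝕜 : Type*} [Fintype n] [DecidableEq n] [RCLike 𝕜]
    {A : Matrix n n 𝕜} (hA : A.PosSemidef) : hA.sqrt * hA.sqrt = A := by
  rw [hA.sqrt_eq_cfcSqrt, CFC.sqrt_mul_sqrt_self A hA.nonneg]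

lemma Matrix.PosDef.inv_mulVec_sqrt_mulVec_sqrt_mulVec {n 𝕜 : Type*} [Fintype n] [DecidableEq n]
    [RCLike 𝕜] {A : Matrix n n 𝕜} (hA : A.PosDef) (x : n → 𝕜) :
    A⁻¹ *ᵥ (hA.posSemidef.sqrt *ᵥ (hA.posSemidef.sqrt *ᵥ x)) = x := by
  rw [mulVec_mulVec, mulVec_mulVec, Matrix.mul_assoc, hA.posSemidef.sqrt_mul_sqrt,
    nonsing_inv_mul A ((isUnit_iff_isUnit_det A).mp hA.isUnit), one_mulVec]

lemma Matrix.PosDef.mulVec_sqrt_inv_mulVec_sqrt_inv_mulVec {n 𝕜 : Type*} [Fintype n]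
    [DecidableEq n] [RCLike 𝕜] {A : Matrix n n 𝕜} (hA : A.PosDef) (x : n → 𝕜) :
    A *ᵥ (hA.inv.posSemidef.sqrt *ᵥ (hA.inv.posSemidef.sqrt *ᵥ x)) = x := by
  rw [mulVec_mulVec, mulVec_mulVec, Matrix.mul_assoc, hA.inv.posSemidef.sqrt_mul_sqrt,
    mul_nonsing_inv A ((isUnit_iff_isUnit_det A).mp hA.isUnit), one_mulVec]

lemma euclNorm_smul {d : ℕ} (c : ℂ) (v : Fin d → ℂ) :
    euclNorm (c • v) = ‖c‖ * euclNorm v := by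
  simp only [euclNorm, map_smul, norm_smul]

lemma euclNorm_eq_one {d : ℕ} {v : Fin d → ℂ} (hv : star v ⬝ᵥ v = 1) :
    euclNorm v = 1 := by
  rw [euclNorm, ← pow_eq_one_iff_of_nonneg (norm_nonneg _) two_ne_zero,
    @norm_sq_eq_re_inner ℂ, EuclideanSpace.inner_eq_star_dotProduct, dotProduct_comm]
  simp [hv]

noncomputable def frameWeight {n : Type*} (a b : n → ℂ) (t : ℝ) : Matrix n n ℂ :=
  vecMulVec a (star a) + (t : ℂ) • vecMulVec b (star b)

section FrameWeight

variable {n : Type*} [Fintype n] {a b : n → ℂ}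

lemma posSemidef_frameWeight {t : ℝ} (ht : 0 ≤ t) : (frameWeight a b t).PosSemidef :=
  (posSemidef_vecMulVec_self_star a).add
    ((posSemidef_vecMulVec_self_star b).smul (Complex.zero_le_real.mpr ht))

lemma frameWeight_mulVec_left (ha : star a ⬝ᵥ a = 1) (hab : star a ⬝ᵥ b = 0) (t : ℝ) :
    frameWeight a b t *ᵥ a = a := by
  have hba : star b ⬝ᵥ a = 0 := by rw [star_dotProduct, hab, star_zero]
  simp [frameWeight, add_mulVec, smul_mulVec, vecMulVec_mulVec, ha, hba]

lemma frameWeight_mulVec_right (hb : star b ⬝ᵥ b = 1) (hab : star a ⬝ᵥ b = 0) (t : ℝ) :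
    frameWeight a b t *ᵥ b = (t : ℂ) • b := by
  simp [frameWeight, add_mulVec, smul_mulVec, vecMulVec_mulVec, hb, hab]

lemma frameWeight_mul (ha : star a ⬝ᵥ a = 1) (hb : star b ⬝ᵥ b = 1)
    (hab : star a ⬝ᵥ b = 0) (s t : ℝ) :
    frameWeight a b s * frameWeight a b t = frameWeight a b (s * t) := by
  have hba : star b ⬝ᵥ a = 0 := by rw [star_dotProduct, hab, star_zero]
  simp only [frameWeight, add_mul, mul_add, Matrix.mul_smul, Matrix.smul_mul,
    vecMulVec_mul_vecMulVec, ha, hb, hab, hba, smul_smul]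
  simp [mul_comm]

open scoped MatrixOrder in
lemma sqrt_frameWeight [DecidableEq n] (ha : star a ⬝ᵥ a = 1) (hb : star b ⬝ᵥ b = 1)
    (hab : star a ⬝ᵥ b = 0) {t : ℝ} (ht : 0 ≤ t) {V : Matrix n n ℂ}
    (hV : V = frameWeight a b t) (hP : V.PosSemidef) :
    hP.sqrt = frameWeight a b (Real.sqrt t) := by
  rw [hP.sqrt_eq_cfcSqrt]
  refine CFC.sqrt_unique ?_ (posSemidef_frameWeight (Real.sqrt_nonneg t)).nonneg
  rw [frameWeight_mul ha hb hab, Real.mul_self_sqrt ht, hV]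

end FrameWeight

section Plane

variable {a b : Fin 2 → ℂ}

lemma vecMulVec_add_vecMulVec_eq_one (ha : star a ⬝ᵥ a = 1) (hb : star b ⬝ᵥ b = 1)
    (hab : star a ⬝ᵥ b = 0) : vecMulVec a (star a) + vecMulVec b (star b) = 1 := by
  have hba : star b ⬝ᵥ a = 0 := by rw [star_dotProduct, hab, star_zero]
  set M : Matrix (Fin 2) (Fin 2) ℂ := of ![star a, star b]
  have hMMstar : M * Mᴴ = 1 := by
    ext i j
    simp only [dotProduct, Fin.sum_univ_two, Pi.star_apply] at ha hb hab hba
    fin_cases i <;> fin_cases j <;> simpa [M, mul_apply, Fin.sum_univ_two]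
  calc vecMulVec a (star a) + vecMulVec b (star b) = Mᴴ * M := by
        ext i j
        simp [M, mul_apply, Fin.sum_univ_two, vecMulVec_apply]
    _ = 1 := mul_eq_one_comm.mp hMMstar

lemma frameWeight_one (ha : star a ⬝ᵥ a = 1) (hb : star b ⬝ᵥ b = 1)
    (hab : star a ⬝ᵥ b = 0) : frameWeight a b 1 = 1 := by
  simpa [frameWeight] using vecMulVec_add_vecMulVec_eq_one ha hb hab

lemma frameWeight_mul_inv (ha : star a ⬝ᵥ a = 1) (hb : star b ⬝ᵥ b = 1)
    (hab : star a ⬝ᵥ b = 0) {t : ℝ} (ht : t ≠ 0) :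
    frameWeight a b t * frameWeight a b t⁻¹ = 1 := by
  rw [frameWeight_mul ha hb hab, mul_inv_cancel₀ ht, frameWeight_one ha hb hab]

lemma inv_frameWeight (ha : star a ⬝ᵥ a = 1) (hb : star b ⬝ᵥ b = 1)
    (hab : star a ⬝ᵥ b = 0) {t : ℝ} (ht : t ≠ 0) :
    (frameWeight a b t)⁻¹ = frameWeight a b t⁻¹ :=
  inv_eq_right_inv (frameWeight_mul_inv ha hb hab ht)

lemma posDef_frameWeight (ha : star a ⬝ᵥ a = 1) (hb : star b ⬝ᵥ b = 1)
    (hab : star a ⬝ᵥ b = 0) {t : ℝ} (ht : 0 < t) : (frameWeight a b t).PosDef :=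
  (posSemidef_frameWeight ht.le).posDef_iff_isUnit.mpr
    (IsUnit.of_mul_eq_one _ (frameWeight_mul_inv ha hb hab ht.ne'))

lemma euclNorm_sqrt_mulVec_of_eq_frameWeight (ha : star a ⬝ᵥ a = 1)
    (hb : star b ⬝ᵥ b = 1) (hab : star a ⬝ᵥ b = 0) {δ : ℝ} (hδ : 0 < δ)
    {V : Matrix (Fin 2) (Fin 2) ℂ}
    (hV : V = frameWeight a b (δ ^ 2)) (hVpd : V.PosDef) :
    euclNorm (hVpd.posSemidef.sqrt *ᵥ b) = δ ∧
      euclNorm (hVpd.inv.posSemidef.sqrt *ᵥ a) = 1 := by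
  have hVinv : V⁻¹ = frameWeight a b (δ ^ 2)⁻¹ := by
    rw [hV, inv_frameWeight ha hb hab (pow_ne_zero 2 hδ.ne')]
  have hsqrt : hVpd.posSemidef.sqrt = frameWeight a b δ := by
    rw [sqrt_frameWeight ha hb hab (sq_nonneg δ) hV, Real.sqrt_sq hδ.le]
  have hsqrtInv : hVpd.inv.posSemidef.sqrt = frameWeight a b δ⁻¹ := by
    rw [sqrt_frameWeight ha hb hab (inv_nonneg.mpr (sq_nonneg δ)) hVinv, Real.sqrt_inv,
      Real.sqrt_sq hδ.le]
  rw [hsqrt, hsqrtInv, frameWeight_mulVec_right hb hab, frameWeight_mulVec_left ha hab,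
    euclNorm_smul, euclNorm_eq_one ha, euclNorm_eq_one hb]
  simp [hδ.le]

end Plane

/-- with `W = a a* + ε² b b*`, `f = W^{1/2} b`, `g = W^{-1/2} a`, one has
`‖W⁻¹ W^{1/2} f‖ ‖W W^{-1/2} g‖ = 1`, `‖f‖ = ε`, `‖g‖ = 1`; hence no constant `C`
independent of the weight gives the bilinear norm bound. -/
theorem bilinear_embedding_norm_failure
    (a b : Fin 2 → ℂ) (ε : ℝ) (hε : 0 < ε)
    (ha : star a ⬝ᵥ a = 1) (hb : star b ⬝ᵥ b = 1) (hab : star a ⬝ᵥ b = 0)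
    (W : Matrix (Fin 2) (Fin 2) ℂ)
    (hW : W = vecMulVec a (star a) + ((ε : ℂ) ^ 2) • vecMulVec b (star b))
    (hWpd : W.PosDef)
    (f g : Fin 2 → ℂ)
    (hf : f = hWpd.posSemidef.sqrt.mulVec b)
    (hg : g = hWpd.inv.posSemidef.sqrt.mulVec a) :
    euclNorm (W⁻¹.mulVec (hWpd.posSemidef.sqrt.mulVec f)) *
        euclNorm (W.mulVec (hWpd.inv.posSemidef.sqrt.mulVec g)) = 1 ∧
    euclNorm f = ε ∧ euclNorm g = 1 ∧
    ¬ ∃ C : ℝ, ∀ (V : Matrix (Fin 2) (Fin 2) ℂ) (hV : V.PosDef) (u v : Fin 2 → ℂ),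
        euclNorm (V⁻¹.mulVec (hV.posSemidef.sqrt.mulVec u)) *
            euclNorm (V.mulVec (hV.inv.posSemidef.sqrt.mulVec v)) ≤
          C * (euclNorm u * euclNorm v) := by
  have hW' : W = frameWeight a b (ε ^ 2) := by rw [hW, frameWeight, Complex.ofReal_pow]
  subst hf hg
  obtain ⟨hf, hg⟩ := euclNorm_sqrt_mulVec_of_eq_frameWeight ha hb hab hε hW' hWpd
  refine ⟨?_, hf, hg, ?_⟩
  · rw [hWpd.inv_mulVec_sqrt_mulVec_sqrt_mulVec, hWpd.mulVec_sqrt_inv_mulVec_sqrt_inv_mulVec,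
      euclNorm_eq_one hb, euclNorm_eq_one ha, one_mul]
  rintro ⟨C, hC⟩
  obtain ⟨δ, hδ, hCδ⟩ := exists_pos_mul_lt one_pos C
  have hVpd := posDef_frameWeight ha hb hab (pow_pos hδ 2)
  obtain ⟨hfδ, hgδ⟩ := euclNorm_sqrt_mulVec_of_eq_frameWeight ha hb hab hδ rfl hVpd
  have hbound := hC _ hVpd (hVpd.posSemidef.sqrt *ᵥ b) (hVpd.inv.posSemidef.sqrt *ᵥ a)
  rw [hVpd.inv_mulVec_sqrt_mulVec_sqrt_mulVec, hVpd.mulVec_sqrt_inv_mulVec_sqrt_inv_mulVec,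
    euclNorm_eq_one hb, euclNorm_eq_one ha, hfδ, hgδ, mul_one] at hbound
  linarith
end

section
/- Let W be a matrix weight and (α_Q) nonnegative scalars with the Carleson condition (1/|K|) Σ_{Q ⊆ K} α_Q ≤ 1 for all dyadic K ⊆ Q₀. Then (1/|K|) Σ_{Q ⊆ K} α_Q ⟨W^{-1}⟩_Q^{-1} ≤ 4 ⟨W⟩_K in the Loewner order, for all dyadic K ⊆ Q₀. -/
/-!
For a dyadic cube `K` write `U_K = ⟨W⟩_K`, `V_K = ⟨W⁻¹⟩_K` and `m_K = |K|⁻¹ Σ_{Q ⊆ K} α_Q ∈ [0, 1]`.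
With the Bellman function `B(U, V, m) = U - (1 + m)⁻¹ V⁻¹` one proves
`|K|⁻¹ Σ_{Q ⊆ K} α_Q V_Q⁻¹ ≤ 4 B(U_K, V_K, m_K)` from the leaves upwards; since `B(U, V, m) ≤ U`,
this gives the theorem. At a leaf `V_K⁻¹ = U_K` and the claim is scalar. For a cube `K` with
children `K₀, K₁` and `β = α_K / |K|` it suffices that `2 B(K₀) + 2 B(K₁) + β V_K⁻¹ ≤ 4 B(K)`.
This follows from the operator convexity estimate `(a + b)² (X + Y)⁻¹ ≤ a² X⁻¹ + b² Y⁻¹`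
with `a² = 2 / (1 + m_{K₀})` and `b² = 2 / (1 + m_{K₁})`, followed by a scalar inequality.
-/

open Matrix
open scoped ComplexOrder

/-- Average over the dyadic cube of generation `m`, index `j`, of a matrix-valued
function which is constant on the `2^N` leaves of the dyadic tree of depth `N`. -/
noncomputable def dyadicAvg {d : ℕ} (N : ℕ) (w : ℕ → Matrix (Fin d) (Fin d) ℂ)
    (m j : ℕ) : Matrix (Fin d) (Fin d) ℂ :=
  (((2 : ℝ) ^ (N - m))⁻¹) • ∑ l ∈ Finset.range (2 ^ (N - m)), w (j * 2 ^ (N - m) + l)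

open scoped MatrixOrder

theorem bellman_scalar_inequality {β m₀ m₁ : ℝ} (hβ : 0 ≤ β) (hm₀ : 0 ≤ m₀) (hm₁ : 0 ≤ m₁)
    (hm : β + (m₀ + m₁) / 2 ≤ 1) :
    2 * (4 * (1 + (β + (m₀ + m₁) / 2))⁻¹ + β) ≤ (√(2 / (1 + m₀)) + √(2 / (1 + m₁))) ^ 2 := by
  set a := √(2 / (1 + m₀))
  set b := √(2 / (1 + m₁))
  have ha : 0 < a := Real.sqrt_pos.2 (by positivity)
  have hb : 0 < b := Real.sqrt_pos.2 (by positivity)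
  have ha2 : (1 + m₀) / 2 = (a ^ 2)⁻¹ := by rw [Real.sq_sqrt (by positivity)]; field_simp
  have hb2 : (1 + m₁) / 2 = (b ^ 2)⁻¹ := by rw [Real.sq_sqrt (by positivity)]; field_simp
  set s := (a ^ 2)⁻¹ + (b ^ 2)⁻¹
  have hs : 0 < s := by positivity
  have hmass : 1 + (β + (m₀ + m₁) / 2) = β + s := by linear_combination ha2 + hb2
  -- convexity of `x ↦ x ^ (-1/2)`
  have hpower : 8 / s ≤ (a + b) ^ 2 := by
    rw [div_le_iff₀ hs]
    have hprod : 8 * (a ^ 2 * b ^ 2) ≤ (a + b) ^ 2 * (a ^ 2 + b ^ 2) := by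
      nlinarith [mul_le_mul (two_mul_le_add_sq a b) (two_mul_le_add_sq a b) (by positivity)
        (by positivity), sq_nonneg (a - b), mul_pos ha hb]
    have e : s * (a ^ 2 * b ^ 2) = a ^ 2 + b ^ 2 := by simp only [s]; field_simp; ring
    nlinarith [mul_pos (mul_pos ha hb) (mul_pos ha hb)]
  have hgain : 2 * (4 * (β + s)⁻¹ + β) ≤ 8 / s := by
    have hsβ : β + s ≤ 2 := by linarith
    have hsum : 0 < β + s := by positivity
    have hdiff : 8 / s - 8 / (β + s) = 8 * β / (s * (β + s)) := by field_simp; ring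
    have hβs : 2 * β ≤ 8 * β / (s * (β + s)) := by
      rw [le_div_iff₀ (by positivity)]
      nlinarith [mul_le_mul (by linarith : s ≤ 2) hsβ hsum.le (by norm_num)]
    have hexpand : 2 * (4 * (β + s)⁻¹ + β) = 8 / (β + s) + 2 * β := by ring
    linarith
  rw [hmass]
  linarith

namespace Matrix

variable {n 𝕜 : Type*} [Fintype n] [DecidableEq n] [RCLike 𝕜]

-- completing the square: `a² X⁻¹ - 2a S + S X S = (S X - a) X⁻¹ (S X - a)ᴴ`
theorem PosDef.smul_sub_mul_mul_le_sq_smul_inv {X S : Matrix n n 𝕜} (hX : X.PosDef)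
    (hS : S.IsHermitian) (a : ℝ) : (2 * a) • S - S * X * S ≤ a ^ 2 • X⁻¹ := by
  have hdet : IsUnit X.det := (isUnit_iff_isUnit_det X).1 hX.isUnit
  have hsq : 0 ≤ (S * X - a • 1) * X⁻¹ * (S * X - a • 1)ᴴ :=
    (hX.inv.posSemidef.mul_mul_conjTranspose_same _).nonneg
  have hstar : (S * X - a • 1)ᴴ = X * S - a • 1 := by
    simp [conjTranspose_sub, conjTranspose_mul, hX.isHermitian.eq, hS.eq]
  simp only [hstar, Matrix.sub_mul, Matrix.mul_sub, Matrix.smul_mul, Matrix.mul_smul,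
    Matrix.mul_one, Matrix.one_mul, ← Matrix.mul_assoc, mul_nonsing_inv_cancel_right X S hdet,
    nonsing_inv_mul X hdet] at hsq
  rw [le_iff, ← nonneg_iff_posSemidef]
  convert hsq using 1
  module

theorem PosDef.sq_smul_inv_add_le {X Y : Matrix n n 𝕜} (hX : X.PosDef) (hY : Y.PosDef)
    (a b : ℝ) :
    (a + b) ^ 2 • (X + Y)⁻¹ ≤ a ^ 2 • X⁻¹ + b ^ 2 • Y⁻¹ := by
  set C := (X + Y)⁻¹
  have hC : (X + Y).PosDef := hX.add hY
  have hS : ((a + b) • C).IsHermitian := hC.inv.isHermitian.smul (IsSelfAdjoint.all _)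
  have hCXC : C * X * C + C * Y * C = C := by
    rw [← Matrix.add_mul, ← Matrix.mul_add,
      nonsing_inv_mul _ ((isUnit_iff_isUnit_det _).1 hC.isUnit), Matrix.one_mul]
  calc (a + b) ^ 2 • C
      = ((2 * a) • ((a + b) • C) - ((a + b) • C) * X * ((a + b) • C))
        + ((2 * b) • ((a + b) • C) - ((a + b) • C) * Y * ((a + b) • C)) := by
        simp only [Matrix.smul_mul, Matrix.mul_smul]
        linear_combination (norm := module) (a + b) ^ 2 • hCXC
    _ ≤ a ^ 2 • X⁻¹ + b ^ 2 • Y⁻¹ :=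
        add_le_add (hX.smul_sub_mul_mul_le_sq_smul_inv hS a)
          (hY.smul_sub_mul_mul_le_sq_smul_inv hS b)

noncomputable def bellman (U V : Matrix n n 𝕜) (m : ℝ) : Matrix n n 𝕜 :=
  U - (1 + m)⁻¹ • V⁻¹

theorem bellman_le {U V : Matrix n n 𝕜} {m : ℝ} (hV : V.PosSemidef) (hm : 0 ≤ 1 + m) :
    bellman U V m ≤ U :=
  sub_le_self U (smul_nonneg (inv_nonneg.2 hm) hV.inv.nonneg)

theorem smul_le_four_smul_bellman_self_inv {W : Matrix n n 𝕜} (hW : W.PosDef) {β : ℝ}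
    (hβ₀ : 0 ≤ β) (hβ₃ : β ≤ 3) : β • W ≤ (4 : ℝ) • bellman W W⁻¹ β := by
  rw [bellman, nonsing_inv_nonsing_inv W ((isUnit_iff_isUnit_det W).1 hW.isUnit)]
  have hcoef : β ≤ 4 * (1 - (1 + β)⁻¹) := by
    rw [show 4 * (1 - (1 + β)⁻¹) = 4 * β / (1 + β) by field_simp; ring, le_div_iff₀ (by linarith)]
    nlinarith
  calc β • W ≤ (4 * (1 - (1 + β)⁻¹)) • W := smul_le_smul_of_nonneg_right hcoef hW.posSemidef.nonneg
    _ = (4 : ℝ) • (W - (1 + β)⁻¹ • W) := by module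

theorem smul_inv_add_two_smul_bellman_le {U₀ U₁ V₀ V₁ : Matrix n n 𝕜} (hV₀ : V₀.PosDef)
    (hV₁ : V₁.PosDef) {β m₀ m₁ : ℝ} (hβ : 0 ≤ β) (hm₀ : 0 ≤ m₀) (hm₁ : 0 ≤ m₁)
    (hm : β + (m₀ + m₁) / 2 ≤ 1) :
    β • ((2⁻¹ : ℝ) • (V₀ + V₁))⁻¹ + (2 : ℝ) • (bellman U₀ V₀ m₀ + bellman U₁ V₁ m₁) ≤
      (4 : ℝ) • bellman ((2⁻¹ : ℝ) • (U₀ + U₁)) ((2⁻¹ : ℝ) • (V₀ + V₁)) (β + (m₀ + m₁) / 2) := by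
  set C := V₀ + V₁
  have hC : C.PosDef := hV₀.add hV₁
  have hinv : ((2⁻¹ : ℝ) • C)⁻¹ = (2 : ℝ) • C⁻¹ := by
    refine inv_eq_right_inv ?_
    rw [Matrix.smul_mul, Matrix.mul_smul, smul_smul,
      mul_nonsing_inv C ((isUnit_iff_isUnit_det C).1 hC.isUnit)]
    norm_num
  have ha : √(2 / (1 + m₀)) ^ 2 = 2 * (1 + m₀)⁻¹ := by rw [Real.sq_sqrt (by positivity)]; ring
  have hb : √(2 / (1 + m₁)) ^ 2 = 2 * (1 + m₁)⁻¹ := by rw [Real.sq_sqrt (by positivity)]; ring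
  set a := √(2 / (1 + m₀))
  set b := √(2 / (1 + m₁))
  set U := (2⁻¹ : ℝ) • (U₀ + U₁)
  calc β • ((2⁻¹ : ℝ) • C)⁻¹ + (2 : ℝ) • (bellman U₀ V₀ m₀ + bellman U₁ V₁ m₁)
      = (4 : ℝ) • U - (a ^ 2 • V₀⁻¹ + b ^ 2 • V₁⁻¹) + (2 * β) • C⁻¹ := by
        rw [hinv, ha, hb, bellman, bellman]; module
    _ ≤ (4 : ℝ) • U - (a + b) ^ 2 • C⁻¹ + (2 * β) • C⁻¹ := by
        gcongr; exact hV₀.sq_smul_inv_add_le hV₁ a b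
    _ ≤ (4 : ℝ) • U - (2 * (4 * (1 + (β + (m₀ + m₁) / 2))⁻¹ + β)) • C⁻¹ + (2 * β) • C⁻¹ := by
        gcongr
        · exact hC.inv.posSemidef.nonneg
        · exact bellman_scalar_inequality hβ hm₀ hm₁ hm
    _ = (4 : ℝ) • bellman U ((2⁻¹ : ℝ) • C) (β + (m₀ + m₁) / 2) := by
        rw [bellman, hinv]; module

end Matrix

theorem Finset.sum_range_two_pow_succ {M : Type*} [AddCommMonoid M] (f : ℕ → M) (e k : ℕ) :
    ∑ l ∈ range (2 ^ (e + 1)), f (k * 2 ^ (e + 1) + l) =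
      ∑ l ∈ range (2 ^ e), f (2 * k * 2 ^ e + l) +
        ∑ l ∈ range (2 ^ e), f ((2 * k + 1) * 2 ^ e + l) := by
  rw [pow_succ, mul_two, sum_range_add]
  congr 1 <;> refine sum_congr rfl fun l _ => congrArg f (by ring)

/-- `Σ_{Q ⊆ K} g Q`, for `K` the dyadic cube of generation `n`, index `k`. -/
def dyadicTreeSum {M : Type*} [AddCommMonoid M] (N : ℕ) (g : ℕ → ℕ → M) (n k : ℕ) : M :=
  ∑ m ∈ Finset.Icc n N, ∑ l ∈ Finset.range (2 ^ (m - n)), g m (k * 2 ^ (m - n) + l)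

section DyadicTreeSum

variable {M : Type*} [AddCommMonoid M] (N : ℕ) (g : ℕ → ℕ → M)

theorem dyadicTreeSum_self (k : ℕ) : dyadicTreeSum N g N k = g N k := by
  simp [dyadicTreeSum]

theorem dyadicTreeSum_of_lt {n : ℕ} (k : ℕ) (hn : n < N) :
    dyadicTreeSum N g n k =
      g n k + (dyadicTreeSum N g (n + 1) (2 * k) + dyadicTreeSum N g (n + 1) (2 * k + 1)) := by
  rw [dyadicTreeSum, ← Finset.Ico_add_one_right_eq_Icc, Finset.sum_eq_sum_Ico_succ_bot (by omega),
    dyadicTreeSum, dyadicTreeSum, ← Finset.sum_add_distrib, Finset.Ico_add_one_right_eq_Icc]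
  congr 1
  · simp
  · refine Finset.sum_congr rfl fun m hm => ?_
    obtain ⟨e, rfl⟩ := Nat.exists_eq_add_of_le (Finset.mem_Icc.1 hm).1
    simp only [show n + 1 + e - n = e + 1 by omega, Nat.add_sub_cancel_left]
    exact Finset.sum_range_two_pow_succ (g (n + 1 + e)) e k

theorem dyadicTreeSum_nonneg [PartialOrder M] [IsOrderedAddMonoid M] (hg : ∀ m j, 0 ≤ g m j)
    (n k : ℕ) : 0 ≤ dyadicTreeSum N g n k :=
  Finset.sum_nonneg fun _ _ => Finset.sum_nonneg fun _ _ => hg _ _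

end DyadicTreeSum

section DyadicAvg

variable {d : ℕ} (N : ℕ) (w : ℕ → Matrix (Fin d) (Fin d) ℂ)

theorem dyadicAvg_self (k : ℕ) : dyadicAvg N w N k = w k := by
  simp [dyadicAvg]

theorem dyadicAvg_of_lt {n : ℕ} (k : ℕ) (hn : n < N) :
    dyadicAvg N w n k =
      (2⁻¹ : ℝ) • (dyadicAvg N w (n + 1) (2 * k) + dyadicAvg N w (n + 1) (2 * k + 1)) := by
  obtain ⟨e, he⟩ : ∃ e, N - n = e + 1 := ⟨N - (n + 1), by omega⟩
  rw [dyadicAvg, dyadicAvg, dyadicAvg, he, show N - (n + 1) = e by omega,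
    Finset.sum_range_two_pow_succ, smul_add, smul_add, smul_smul, smul_smul, pow_succ, mul_inv,
    mul_comm]

theorem dyadicAvg_posDef (hw : ∀ j < 2 ^ N, (w j).PosDef) {n k : ℕ} (hn : n ≤ N)
    (hk : k < 2 ^ n) : (dyadicAvg N w n k).PosDef := by
  refine .smul (posDef_sum (Finset.nonempty_range_iff.2 (by positivity)) fun l hl => hw _ ?_)
    (by positivity)
  calc k * 2 ^ (N - n) + l < (k + 1) * 2 ^ (N - n) := by
        rw [add_one_mul]; exact Nat.add_lt_add_left (Finset.mem_range.1 hl) _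
    _ ≤ 2 ^ n * 2 ^ (N - n) := Nat.mul_le_mul_right _ hk
    _ = 2 ^ N := by rw [← pow_add, Nat.add_sub_cancel' hn]

end DyadicAvg

theorem smul_dyadicTreeSum_le_four_smul_bellman {d : ℕ} (N : ℕ)
    (w : ℕ → Matrix (Fin d) (Fin d) ℂ)
    (hw : ∀ j < 2 ^ N, (w j).PosDef) (α : ℕ → ℕ → ℝ) (hα : ∀ m j, 0 ≤ α m j)
    (hCarl : ∀ n ≤ N, ∀ k < 2 ^ n, (2 : ℝ) ^ n * dyadicTreeSum N α n k ≤ 1)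
    {n : ℕ} (hn : n ≤ N) : ∀ k < 2 ^ n,
      (2 : ℝ) ^ n • dyadicTreeSum N
          (fun m j => α m j • (dyadicAvg N (fun j => (w j)⁻¹) m j)⁻¹) n k ≤
        (4 : ℝ) • bellman (dyadicAvg N w n k) (dyadicAvg N (fun j => (w j)⁻¹) n k)
          ((2 : ℝ) ^ n * dyadicTreeSum N α n k) := by
  induction hn using Nat.decreasingInduction with
  | self =>
    intro k hk
    have hβ := hCarl N le_rfl k hk
    simp only [dyadicTreeSum_self, dyadicAvg_self] at hβ ⊢
    rw [smul_smul, nonsing_inv_nonsing_inv _ ((isUnit_iff_isUnit_det _).1 (hw k hk).isUnit)]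
    exact smul_le_four_smul_bellman_self_inv (hw k hk)
      (mul_nonneg (by positivity) (hα N k)) (by linarith)
  | of_succ n hn ih =>
    intro k hk
    have hk₀ : 2 * k < 2 ^ (n + 1) := by rw [pow_succ]; omega
    have hk₁ : 2 * k + 1 < 2 ^ (n + 1) := by rw [pow_succ]; omega
    have hv : ∀ j < 2 ^ N, ((w j)⁻¹).PosDef := fun j hj => (hw j hj).inv
    have hK := hCarl n hn.le k hk
    rw [dyadicTreeSum_of_lt _ _ k hn] at hK ⊢
    rw [dyadicTreeSum_of_lt _ _ k hn, dyadicAvg_of_lt N w k hn, dyadicAvg_of_lt N _ k hn]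
    set U₀ := dyadicAvg N w (n + 1) (2 * k)
    set U₁ := dyadicAvg N w (n + 1) (2 * k + 1)
    set V₀ := dyadicAvg N (fun j => (w j)⁻¹) (n + 1) (2 * k)
    set V₁ := dyadicAvg N (fun j => (w j)⁻¹) (n + 1) (2 * k + 1)
    set m₀ := (2 : ℝ) ^ (n + 1) * dyadicTreeSum N α (n + 1) (2 * k)
    set m₁ := (2 : ℝ) ^ (n + 1) * dyadicTreeSum N α (n + 1) (2 * k + 1)
    set T₀ := dyadicTreeSum N (fun m j => α m j • (dyadicAvg N (fun j => (w j)⁻¹) m j)⁻¹)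
      (n + 1) (2 * k)
    set T₁ := dyadicTreeSum N (fun m j => α m j • (dyadicAvg N (fun j => (w j)⁻¹) m j)⁻¹)
      (n + 1) (2 * k + 1)
    have hmass : (2 : ℝ) ^ n * (α n k + (dyadicTreeSum N α (n + 1) (2 * k) +
        dyadicTreeSum N α (n + 1) (2 * k + 1))) = (2 : ℝ) ^ n * α n k + (m₀ + m₁) / 2 := by
      simp only [m₀, m₁]; ring
    rw [hmass] at hK ⊢
    calc (2 : ℝ) ^ n • (α n k • ((2⁻¹ : ℝ) • (V₀ + V₁))⁻¹ + (T₀ + T₁))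
        = ((2 : ℝ) ^ n * α n k) • ((2⁻¹ : ℝ) • (V₀ + V₁))⁻¹ +
            (2⁻¹ : ℝ) • ((2 : ℝ) ^ (n + 1) • T₀ + (2 : ℝ) ^ (n + 1) • T₁) := by
          rw [pow_succ]; module
      _ ≤ ((2 : ℝ) ^ n * α n k) • ((2⁻¹ : ℝ) • (V₀ + V₁))⁻¹ +
            (2⁻¹ : ℝ) • ((4 : ℝ) • bellman U₀ V₀ m₀ + (4 : ℝ) • bellman U₁ V₁ m₁) := by
          gcongr
          exacts [ih _ hk₀, ih _ hk₁]
      _ = ((2 : ℝ) ^ n * α n k) • ((2⁻¹ : ℝ) • (V₀ + V₁))⁻¹ +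
            (2 : ℝ) • (bellman U₀ V₀ m₀ + bellman U₁ V₁ m₁) := by
          module
      _ ≤ _ := smul_inv_add_two_smul_bellman_le (dyadicAvg_posDef N _ hv hn hk₀)
          (dyadicAvg_posDef N _ hv hn hk₁) (mul_nonneg (by positivity) (hα n k))
          (mul_nonneg (by positivity) (dyadicTreeSum_nonneg N α hα _ _))
          (mul_nonneg (by positivity) (dyadicTreeSum_nonneg N α hα _ _)) hK

/-- finite dyadic-martingale version: if the nonnegative scalars `α_Q`
satisfy the Carleson condition `(1/|K|) Σ_{Q ⊆ K} α_Q ≤ 1`, then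
`(1/|K|) Σ_{Q ⊆ K} α_Q ⟨W⁻¹⟩_Q⁻¹ ≤ 4 ⟨W⟩_K` in the Loewner order. -/
theorem scalar_sequence_redundancy
    {d : ℕ} (N : ℕ) (w : ℕ → Matrix (Fin d) (Fin d) ℂ)
    (hw : ∀ j < 2 ^ N, (w j).PosDef)
    (α : ℕ → ℕ → ℝ) (hα : ∀ m j, 0 ≤ α m j)
    (hCarl : ∀ n ≤ N, ∀ k < 2 ^ n,
      (2 : ℝ) ^ n * ∑ m ∈ Finset.Icc n N, ∑ l ∈ Finset.range (2 ^ (m - n)),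
        α m (k * 2 ^ (m - n) + l) ≤ 1) :
    ∀ n ≤ N, ∀ k < 2 ^ n,
      ((4 : ℝ) • dyadicAvg N w n k -
        (2 : ℝ) ^ n • ∑ m ∈ Finset.Icc n N, ∑ l ∈ Finset.range (2 ^ (m - n)),
          α m (k * 2 ^ (m - n) + l) •
            (dyadicAvg N (fun j => (w j)⁻¹) m (k * 2 ^ (m - n) + l))⁻¹).PosSemidef := by
  intro n hn k hk
  have hmass : 0 ≤ 1 + (2 : ℝ) ^ n * dyadicTreeSum N α n k := by
    have := dyadicTreeSum_nonneg N α hα n k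
    positivity
  have hV := (dyadicAvg_posDef N _ (fun j hj => (hw j hj).inv) hn hk).posSemidef
  have hbound := smul_dyadicTreeSum_le_four_smul_bellman N w hw α hα hCarl hn k hk
  exact Matrix.le_iff.1 <|
    hbound.trans (smul_le_smul_of_nonneg_left (Matrix.bellman_le hV hmass) (by norm_num))
end
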